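/- arXiv:2603.14487 — 2 statements merged into one kernel-verified Lean document; each statement's English description precedes it below -/
import Mathlib

section
/- For all real s > 0, the Laplace transform of the function t ↦ e^{-t/2} I₀(t/2) equals 1/√(s(1+s)), where I₀ is the modified Bessel function of the first kind of order 0. -/
/-!
Expanding termwise, `I₀(bt) = ∑ⱼ (b²/4)ʲ t^{2j} / j!²`, and each term has Laplace transform
`∫₀^∞ e^{-at} t^{2j} dt = (2j)! / a^{2j+1}`. Since `(2j)! / j!² = C(2j, j)`, the Laplace transform
of `I₀(bt)` at `a > |b|` is `a⁻¹ ∑ⱼ C(2j, j) (b² / 4a²)ʲ = 1 / √(a² - b²)`, by the binomial series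
`∑ⱼ C(2j, j) xʲ = (1 - 4x)^{-1/2}`; the exchange of sum and integral is legitimate because the
same computation with absolute values converges. The theorem is the case `a = s + 1/2`, `b = 1/2`,
where `a² - b² = s (1 + s)`.
-/

open Real MeasureTheory

noncomputable def besselI0 (ζ : ℝ) : ℝ := ∑' j : ℕ, (ζ ^ 2 / 4) ^ j / ((Nat.factorial j : ℝ)) ^ 2

open Nat Set

lemma ascPochhammer_eval_half_mul_four_pow (n : ℕ) :
    (ascPochhammer ℝ n).eval (1 / 2) * 4 ^ n = n.centralBinom * n ! := by
  induction n with
  | zero => simp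
  | succ n ih =>
    have h := congrArg (Nat.cast (R := ℝ)) (succ_mul_centralBinom_succ n)
    push_cast at h
    rw [ascPochhammer_succ_eval, factorial_succ, pow_succ]
    push_cast
    linear_combination 2 * (2 * (n : ℝ) + 1) * ih - (n ! : ℝ) * h

lemma hasSum_centralBinom_mul_pow {x : ℝ} (hx : |x| < 1 / 4) :
    HasSum (fun n ↦ (n.centralBinom : ℝ) * x ^ n) (1 / √(1 - 4 * x)) := by
  have hball : 4 * x ∈ Metric.eball (0 : ℝ) 1 := by
    rw [← ENNReal.coe_one, Metric.eball_coe, NNReal.coe_one, mem_ball_zero_iff, norm_eq_abs,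
      abs_mul, abs_of_pos four_pos]
    linarith
  -- The coefficients of the binomial series of `(1 - y)^{-1/2}` are `centralBinom n / 4ⁿ`.
  have h := (one_div_one_sub_rpow_hasFPowerSeriesOnBall_zero (1 / 2)).hasSum hball
  simp only [FormalMultilinearSeries.ofScalars_apply_eq, zero_add, smul_eq_mul] at h
  have hcoeff (n : ℕ) :
      (n.centralBinom : ℝ) * x ^ n = Ring.choose (1 / 2 + n - 1 : ℝ) n * (4 * x) ^ n := by
    rw [← Ring.multichoose_eq, mul_pow, ← mul_assoc]
    congr 1
    have hfac : (n.factorial : ℝ) ≠ 0 := by positivity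
    rw [← mul_left_inj' hfac, ← ascPochhammer_eval_half_mul_four_pow,
      ← Polynomial.ascPochhammer_smeval_eq_eval,
      ← Ring.factorial_nsmul_multichoose_eq_ascPochhammer, nsmul_eq_mul]
    ring
  simpa only [hcoeff, sqrt_eq_rpow] using h

lemma integral_exp_neg_mul_mul_pow {a : ℝ} (ha : 0 < a) (n : ℕ) :
    ∫ t in Ioi 0, exp (-(a * t)) * t ^ n = n ! / a ^ (n + 1) := by
  have h := integral_rpow_mul_exp_neg_mul_Ioi (a := n + 1) (by positivity) ha
  rw [← Nat.cast_add_one, rpow_natCast, Nat.cast_add_one, Gamma_nat_eq_factorial,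
    add_sub_cancel_right] at h
  simp_rw [rpow_natCast] at h
  rw [setIntegral_congr_fun measurableSet_Ioi fun t _ ↦ mul_comm (exp _) (t ^ n), h,
    one_div_pow, one_div_mul_eq_div]

lemma integrableOn_exp_neg_mul_mul_pow {a : ℝ} (ha : 0 < a) (n : ℕ) :
    IntegrableOn (fun t ↦ exp (-(a * t)) * t ^ n) (Ioi 0) := by
  -- A non-integrable function has integral `0`, and this integral is `n! / a^{n+1} ≠ 0`.
  refine Integrable.of_integral_ne_zero ?_
  rw [integral_exp_neg_mul_mul_pow ha]
  positivity

lemma integral_exp_neg_mul_mul_tsum_pow {ι : Type*} [Countable ι] {a : ℝ} (ha : 0 < a)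
    (c : ι → ℝ) (e : ι → ℕ) (hc : Summable fun i ↦ |c i| * (e i)! / a ^ (e i + 1)) :
    ∫ t in Ioi 0, exp (-(a * t)) * ∑' i, c i * t ^ e i =
      ∑' i, c i * (e i)! / a ^ (e i + 1) := by
  have hint (i : ι) : IntegrableOn (fun t ↦ c i * (exp (-(a * t)) * t ^ e i)) (Ioi 0) :=
    (integrableOn_exp_neg_mul_mul_pow ha (e i)).const_mul (c i)
  have hnorm (i : ι) : ∫ t in Ioi 0, ‖c i * (exp (-(a * t)) * t ^ e i)‖ =
      |c i| * (e i)! / a ^ (e i + 1) := by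
    have habs : ∀ t ∈ Ioi (0 : ℝ),
        ‖c i * (exp (-(a * t)) * t ^ e i)‖ = |c i| * (exp (-(a * t)) * t ^ e i) := by
      intro t ht
      rw [norm_mul, norm_eq_abs, norm_of_nonneg (by have := ht.out.le; positivity)]
    rw [setIntegral_congr_fun measurableSet_Ioi habs, integral_const_mul,
      integral_exp_neg_mul_mul_pow ha, mul_div_assoc]
  simp_rw [← tsum_mul_left, mul_left_comm (exp _)]
  rw [← integral_tsum_of_summable_integral_norm hint (by simpa only [hnorm])]
  simp_rw [integral_const_mul, integral_exp_neg_mul_mul_pow ha, mul_div_assoc]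

lemma besselI0_mul (b t : ℝ) :
    besselI0 (b * t) = ∑' j : ℕ, (b ^ 2 / 4) ^ j / (j ! : ℝ) ^ 2 * t ^ (2 * j) := by
  unfold besselI0
  congr 1 with j
  rw [pow_mul, mul_pow, mul_div_right_comm, mul_pow, div_mul_eq_mul_div]

lemma integral_exp_neg_mul_mul_besselI0 {a b : ℝ} (hab : |b| < a) :
    ∫ t in Ioi 0, exp (-(a * t)) * besselI0 (b * t) = 1 / √(a ^ 2 - b ^ 2) := by
  have ha : 0 < a := (abs_nonneg b).trans_lt hab
  have hsq : b ^ 2 < a ^ 2 := sq_lt_sq' (abs_lt.mp hab).1 (abs_lt.mp hab).2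
  have hx : |b ^ 2 / (4 * a ^ 2)| < 1 / 4 := by
    rw [abs_of_nonneg (by positivity), div_lt_iff₀ (by positivity)]
    linarith
  have hcoeff (j : ℕ) : (b ^ 2 / 4) ^ j / (j ! : ℝ) ^ 2 * (2 * j)! / a ^ (2 * j + 1) =
      a⁻¹ * ((j.centralBinom : ℝ) * (b ^ 2 / (4 * a ^ 2)) ^ j) := by
    rw [centralBinom_eq_two_mul_choose, two_mul, ← add_choose_mul_factorial_mul_factorial j j,
      div_pow, div_pow, mul_pow, ← pow_mul]
    push_cast
    field_simp
    ring
  have hsum := (hasSum_centralBinom_mul_pow hx).mul_left a⁻¹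
  simp_rw [← hcoeff] at hsum
  have hroot : a ^ 2 - b ^ 2 = a ^ 2 * (1 - 4 * (b ^ 2 / (4 * a ^ 2))) := by
    field_simp
  simp_rw [besselI0_mul]
  rw [integral_exp_neg_mul_mul_tsum_pow ha _ _
    (hsum.summable.congr fun j ↦ by rw [abs_of_nonneg (by positivity)]), hsum.tsum_eq, hroot,
    sqrt_mul (sq_nonneg a), sqrt_sq ha.le]
  ring

theorem laplace_transform_bessel (s : ℝ) (hs : 0 < s) :
    ∫ t in Set.Ioi (0 : ℝ), Real.exp (-s * t) * (Real.exp (-t / 2) * besselI0 (t / 2)) =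
      1 / Real.sqrt (s * (1 + s)) := by
  have hexp (t : ℝ) : exp (-s * t) * (exp (-t / 2) * besselI0 (t / 2)) =
      exp (-((s + 1 / 2) * t)) * besselI0 (1 / 2 * t) := by
    rw [← mul_assoc, ← exp_add]
    ring_nf
  simp_rw [hexp]
  rw [integral_exp_neg_mul_mul_besselI0 (by rw [abs_of_pos one_half_pos]; linarith)]
  congr 2
  ring
end

section
/- Define f_M(t) = (1/2) e^{-t/2} [I₀(ζ) - I₀''(ζ)]_{ζ=t/2}. Then f_M(0) = 1/4 and f_M(t) ≥ 0 for all t ≥ 0. -/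
noncomputable def fM (t : ℝ) : ℝ :=
  (1 / 2) * Real.exp (-t / 2) * (besselI0 (t / 2) - deriv (deriv besselI0) (t / 2))

/-!
Write `I₀ ζ = ∑ cₙ ζⁿ` with `c₂ⱼ = 1 / (4ʲ (j!)²)` and odd coefficients zero. The series is
entire, so it may be differentiated termwise, and the Bessel recursion `(n + 2)² cₙ₊₂ = cₙ` turns
the coefficients of `I₀''` into `(n + 1) (n + 2) cₙ₊₂ = (n + 1) / (n + 2) · cₙ ≤ cₙ`. Hence
`I₀ - I₀''` has nonnegative coefficients and is nonnegative on `ζ ≥ 0`. At `ζ = 0` only the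
constant terms survive: `I₀ 0 = c₀ = 1` and `I₀'' 0 = 2 c₂ = 1 / 2`, so `f_M 0 = 1 / 4`.
-/

open Filter Topology Nat

def derivCoeff (a : ℕ → ℝ) (n : ℕ) : ℝ := (n + 1) * a (n + 1)

def IsEntireCoeff (a : ℕ → ℝ) : Prop := ∀ r : ℝ, Summable fun n => ‖a n * r ^ n‖

namespace IsEntireCoeff

variable {a : ℕ → ℝ}

theorem summable (ha : IsEntireCoeff a) (x : ℝ) : Summable fun n => a n * x ^ n :=
  (ha x).of_norm

theorem derivCoeff (ha : IsEntireCoeff a) : IsEntireCoeff (derivCoeff a) := by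
  intro r
  set s := |r| + 1
  set q := |r| / s
  have hs : 0 < s := by positivity
  have hq : q < 1 := (div_lt_one hs).2 (lt_add_one _)
  have hlim : Tendsto (fun n : ℕ => (n * q ^ n + q ^ n) / s) cofinite (𝓝 0) := by
    rw [Nat.cofinite_eq_atTop]
    simpa using ((tendsto_self_mul_const_pow_of_lt_one (by positivity) hq).add
      (tendsto_pow_atTop_nhds_zero_of_lt_one (by positivity) hq)).div_const s
  have hsum : Summable fun n => ‖‖a (n + 1) * s ^ (n + 1)‖‖ := by
    simpa only [norm_norm] using (summable_nat_add_iff 1).2 (ha s)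
  -- `(n + 1) |a (n + 1)| |r| ^ n = |a (n + 1)| s ^ (n + 1) * ((n + 1) q ^ n / s)`
  refine (hsum.mul_tendsto_const hlim).congr fun n => ?_
  simp only [_root_.derivCoeff, norm_mul, norm_pow, Real.norm_eq_abs, q, div_pow, abs_of_pos hs,
    abs_of_nonneg (by positivity : (0 : ℝ) ≤ n + 1)]
  field_simp
  ring

theorem hasDerivAt (ha : IsEntireCoeff a) (x : ℝ) :
    HasDerivAt (fun y => ∑' n, a n * y ^ n) (∑' n, _root_.derivCoeff a n * x ^ n) x := by
  set R := |x| + 1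
  have hx : x ∈ Set.Ioo (-R) R := abs_lt.1 (lt_add_one _)
  have hdom (n : ℕ) (y : ℝ) (hy : y ∈ Set.Ioo (-R) R) :
      ‖a n * (n * y ^ (n - 1))‖ ≤ ‖(n : ℝ) * a n * R ^ (n - 1)‖ := by
    have hy' : |y| ≤ |R| := (abs_le.2 ⟨hy.1.le, hy.2.le⟩).trans (le_abs_self R)
    simp only [norm_mul, norm_pow, Real.norm_eq_abs]
    rw [← mul_assoc, mul_comm |a n|]
    gcongr
  have hdom_summable : Summable fun n : ℕ => ‖(n : ℝ) * a n * R ^ (n - 1)‖ := by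
    refine (summable_nat_add_iff 1).1 ((ha.derivCoeff R).congr fun n => ?_)
    simp [_root_.derivCoeff]
  have hshift (n : ℕ) :
      a (n + 1) * (((n + 1 : ℕ) : ℝ) * x ^ (n + 1 - 1)) = _root_.derivCoeff a n * x ^ n := by
    simp [_root_.derivCoeff]
    ring
  refine (hasDerivAt_tsum_of_isPreconnected hdom_summable isOpen_Ioo isPreconnected_Ioo
    (fun n y _ => (hasDerivAt_pow n y).const_mul (a n)) hdom hx (ha.summable x) hx).congr_deriv ?_
  rw [tsum_eq_zero_add' (by simpa only [hshift] using ha.derivCoeff.summable x)]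
  simp only [hshift, Nat.cast_zero, zero_mul, mul_zero, zero_add]

theorem deriv_deriv_tsum (ha : IsEntireCoeff a) (x : ℝ) :
    deriv (deriv fun y => ∑' n, a n * y ^ n) x =
      ∑' n, _root_.derivCoeff (_root_.derivCoeff a) n * x ^ n := by
  rw [funext fun y => (ha.hasDerivAt y).deriv]
  exact (ha.derivCoeff.hasDerivAt x).deriv

end IsEntireCoeff

theorem tsum_mul_zero_pow (a : ℕ → ℝ) : ∑' n, a n * 0 ^ n = a 0 := by
  rw [tsum_eq_single 0 fun n hn => by simp [hn]]
  simp

noncomputable def besselI0Coeff (n : ℕ) : ℝ :=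
  if Even n then ((2 : ℝ) ^ n * ((n / 2)! : ℝ) ^ 2)⁻¹ else 0

theorem besselI0Coeff_nonneg (n : ℕ) : 0 ≤ besselI0Coeff n := by
  unfold besselI0Coeff
  split_ifs <;> positivity

theorem besselI0Coeff_le_inv_factorial (n : ℕ) : besselI0Coeff n ≤ (n ! : ℝ)⁻¹ := by
  unfold besselI0Coeff
  split_ifs with hn
  · obtain ⟨j, rfl⟩ := hn
    have hfac : (j + j)! ≤ 2 ^ (j + j) * (j ! * j !) := by
      rw [← Nat.choose_mul_factorial_mul_factorial (Nat.le_add_left j j), Nat.add_sub_cancel,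
        mul_assoc]
      exact Nat.mul_le_mul_right _ (Nat.choose_le_two_pow _ _)
    rw [show (j + j) / 2 = j by omega]
    gcongr
    rw [sq]
    exact_mod_cast hfac
  · positivity

theorem isEntireCoeff_besselI0Coeff : IsEntireCoeff besselI0Coeff := fun r =>
  (Real.summable_pow_div_factorial |r|).of_nonneg_of_le (fun _ => norm_nonneg _) fun n => by
    rw [norm_mul, norm_pow, Real.norm_eq_abs, Real.norm_eq_abs,
      abs_of_nonneg (besselI0Coeff_nonneg n), div_eq_inv_mul]
    gcongr
    exact besselI0Coeff_le_inv_factorial n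

theorem sq_add_two_mul_besselI0Coeff (n : ℕ) :
    ((n : ℝ) + 2) ^ 2 * besselI0Coeff (n + 2) = besselI0Coeff n := by
  unfold besselI0Coeff
  by_cases hn : Even n
  · obtain ⟨j, rfl⟩ := hn
    have h2 : Even (j + j + 2) := ⟨j + 1, by ring⟩
    rw [if_pos h2, if_pos ⟨j, rfl⟩, show (j + j + 2) / 2 = j + 1 by omega,
      show (j + j) / 2 = j by omega, Nat.factorial_succ]
    push_cast
    field_simp
    ring
  · have h2 : ¬ Even (n + 2) := by simpa [Nat.even_add] using hn
    rw [if_neg h2, if_neg hn, mul_zero]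

theorem besselI0_eq_tsum : besselI0 = fun ζ => ∑' n, besselI0Coeff n * ζ ^ n := by
  funext ζ
  have hsum := isEntireCoeff_besselI0Coeff.summable ζ
  have heven (k : ℕ) : besselI0Coeff (2 * k) * ζ ^ (2 * k) = (ζ ^ 2 / 4) ^ k / (k ! : ℝ) ^ 2 := by
    simp only [besselI0Coeff, even_two_mul, if_true, Nat.mul_div_cancel_left k two_pos, pow_mul,
      div_pow]
    norm_num
    field_simp
  have hodd (k : ℕ) : besselI0Coeff (2 * k + 1) * ζ ^ (2 * k + 1) = 0 := by
    simp [besselI0Coeff]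
  have hinj : Function.Injective (2 * · : ℕ → ℕ) := mul_right_injective₀ two_ne_zero
  rw [← tsum_even_add_odd (f := fun n => besselI0Coeff n * ζ ^ n) (hsum.comp_injective hinj)
    (hsum.comp_injective ((add_left_injective 1).comp hinj))]
  simp only [heven, hodd, tsum_zero, add_zero, besselI0]

theorem derivCoeff_derivCoeff_besselI0Coeff_le (n : ℕ) :
    derivCoeff (derivCoeff besselI0Coeff) n ≤ besselI0Coeff n := by
  have h := sq_add_two_mul_besselI0Coeff n
  have h0 := besselI0Coeff_nonneg (n + 2)
  simp only [derivCoeff, Nat.cast_add, Nat.cast_one]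
  nlinarith

theorem besselI0_zero : besselI0 0 = 1 := by
  simp only [besselI0_eq_tsum, tsum_mul_zero_pow]
  simp [besselI0Coeff]

theorem deriv_deriv_besselI0_zero : deriv (deriv besselI0) 0 = 1 / 2 := by
  rw [besselI0_eq_tsum, isEntireCoeff_besselI0Coeff.deriv_deriv_tsum, tsum_mul_zero_pow]
  norm_num [derivCoeff, besselI0Coeff]

theorem besselI0_sub_deriv_deriv_nonneg {x : ℝ} (hx : 0 ≤ x) :
    0 ≤ besselI0 x - deriv (deriv besselI0) x := by
  rw [besselI0_eq_tsum, isEntireCoeff_besselI0Coeff.deriv_deriv_tsum,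
    ← (isEntireCoeff_besselI0Coeff.summable x).tsum_sub
      (isEntireCoeff_besselI0Coeff.derivCoeff.derivCoeff.summable x)]
  refine tsum_nonneg fun n => ?_
  rw [← sub_mul]
  exact mul_nonneg (sub_nonneg.2 (derivCoeff_derivCoeff_besselI0Coeff_le n)) (pow_nonneg hx n)

theorem fM_density_properties : fM 0 = 1 / 4 ∧ ∀ t : ℝ, 0 ≤ t → 0 ≤ fM t := by
  refine ⟨?_, fun t ht => ?_⟩
  · simp only [fM, zero_div, neg_zero, Real.exp_zero, besselI0_zero, deriv_deriv_besselI0_zero]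
    norm_num
  · exact mul_nonneg (by positivity) (besselI0_sub_deriv_deriv_nonneg (by positivity))
end
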